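/- arXiv:quant-ph/9910067 — 12 statements merged into one kernel-verified Lean document; each statement's English description precedes it below -/
import Mathlib

section
/- Let C be a linear subspace of EuclideanSpace ℂ (Fin m × Fin n) such that for every matrix E : Matrix (Fin n) (Fin n) ℂ there is a constant c(E) ∈ ℂ with ⟨ψ, ((1 : Matrix (Fin m) (Fin m) ℂ) ⊗ₖ E).mulVec ψ⟩ = c(E) for every unit vector ψ ∈ C. Then for any two orthogonal vectors ψ, φ ∈ C and every E : Matrix (Fin n) (Fin n) ℂ, one has ⟨ψ, (1 ⊗ₖ E).mulVec φ⟩ = 0. -/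
open scoped ComplexInnerProductSpace Kronecker

/-- If all expectation values of operators on the second factor are state-independent on a
subspace `C`, then all cross matrix elements of such operators between orthogonal vectors
of `C` vanish (the Knill–Laflamme erasure-correction condition). -/
theorem cross_terms_vanish_of_erasure_condition (m n : ℕ)
    (C : Submodule ℂ (EuclideanSpace ℂ (Fin m × Fin n)))
    (h : ∀ E : Matrix (Fin n) (Fin n) ℂ, ∃ c : ℂ,
        ∀ ψ ∈ C, ‖ψ‖ = 1 →
          ⟪ψ, WithLp.toLp 2 (((1 : Matrix (Fin m) (Fin m) ℂ) ⊗ₖ E).mulVec ψ)⟫ = c) :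
    ∀ ψ ∈ C, ∀ φ ∈ C, ⟪ψ, φ⟫ = 0 →
      ∀ E : Matrix (Fin n) (Fin n) ℂ,
        ⟪ψ, WithLp.toLp 2 (((1 : Matrix (Fin m) (Fin m) ℂ) ⊗ₖ E).mulVec φ)⟫ = 0 := by
  intro ψ hψ φ hφ horth E
  obtain ⟨c, hc⟩ := h E
  set M := (1 : Matrix (Fin m) (Fin m) ℂ) ⊗ₖ E with hM
  have mvadd : ∀ x y : EuclideanSpace ℂ (Fin m × Fin n),
      WithLp.toLp 2 (M.mulVec (WithLp.ofLp (x + y))) = WithLp.toLp 2 (M.mulVec x) + WithLp.toLp 2 (M.mulVec y) := by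
    intro x y; rw [WithLp.ofLp_add, Matrix.mulVec_add, WithLp.toLp_add]
  have mvsmul : ∀ (r : ℂ) (y : EuclideanSpace ℂ (Fin m × Fin n)),
      WithLp.toLp 2 (M.mulVec (WithLp.ofLp (r • y))) = r • WithLp.toLp 2 (M.mulVec y) := by
    intro r y; rw [WithLp.ofLp_smul, Matrix.mulVec_smul, WithLp.toLp_smul]
  have key : ∀ x ∈ C, ⟪x, WithLp.toLp 2 (M.mulVec x)⟫ = c * ⟪x, x⟫ := by
    intro x hx
    by_cases hx0 : x = (0 : EuclideanSpace ℂ (Fin m × Fin n))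
    · subst hx0
      simp
    · have hn : ‖x‖ ≠ 0 := norm_ne_zero_iff.mpr hx0
      have hmem : ((‖x‖ : ℂ)⁻¹ • x) ∈ C := C.smul_mem _ hx
      have hnorm : ‖(‖x‖ : ℂ)⁻¹ • x‖ = 1 := by
        rw [norm_smul]
        simp [hn]
      have hu := hc _ hmem hnorm
      rw [mvsmul, inner_smul_left, inner_smul_right] at hu
      have hconj : (starRingEnd ℂ) ((‖x‖ : ℂ)⁻¹) = (‖x‖ : ℂ)⁻¹ := by simp
      rw [hconj] at hu
      have hns : ⟪x, x⟫ = (‖x‖ : ℂ) ^ 2 := inner_self_eq_norm_sq_to_K x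
      have hnc : (‖x‖ : ℂ) ≠ 0 := by exact_mod_cast hn
      rw [hns]
      generalize hJ : ⟪x, WithLp.toLp 2 (M.mulVec x)⟫ = J at hu ⊢
      field_simp at hu
      linear_combination hu
  have horth' : ⟪φ, ψ⟫ = (0 : ℂ) := by
    rw [← inner_conj_symm, horth]; simp
  have hkψ := key ψ hψ
  have hkφ := key φ hφ
  have h1 := key (ψ + φ) (C.add_mem hψ hφ)
  have h2 := key (ψ + Complex.I • φ) (C.add_mem hψ (C.smul_mem _ hφ))
  simp only [mvadd, mvsmul, inner_add_left, inner_add_right,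
    inner_smul_left, inner_smul_right, horth, horth', Complex.conj_I] at h1 h2
  linear_combination (1/2 : ℂ) * h1 - (Complex.I/2) * h2
    + ((Complex.I - 1)/2) * hkψ - ((1 + Complex.I^3)/2) * hkφ
    + ((⟪ψ, WithLp.toLp 2 (M.mulVec φ)⟫ - ⟪φ, WithLp.toLp 2 (M.mulVec ψ)⟫)/2) * Complex.I_mul_I
end

section
/- Let ψ : ι → EuclideanSpace ℂ (Fin m × Fin n) be a family of vectors. Then the following are equivalent: (i) for all i ≠ j and every matrix E : Matrix (Fin n) (Fin n) ℂ, ⟨ψ i, ((1 : Matrix (Fin m) (Fin m) ℂ) ⊗ₖ E).mulVec (ψ j)⟩ = 0; (ii) for all i ≠ j and all indices l, l' ∈ Fin n, the first-factor components satisfy ⟨a_l(ψ i), a_{l'}(ψ j)⟩ = 0, where a_l(ψ)(k) = ψ(k,l). -/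
open scoped ComplexInnerProductSpace Kronecker

/-- The `l`-th component of a bipartite vector on the first factor: `a_l(ψ)(k) = ψ(k,l)`. -/
noncomputable def firstFactorComponent {m n : ℕ} (ψ : EuclideanSpace ℂ (Fin m × Fin n))
    (l : Fin n) : EuclideanSpace ℂ (Fin m) :=
  WithLp.toLp 2 (fun k => ψ (k, l))

lemma inner_one_kron_mulVec {m n : ℕ} (φ χ : EuclideanSpace ℂ (Fin m × Fin n))
    (E : Matrix (Fin n) (Fin n) ℂ) :
    ⟪φ, WithLp.toLp 2 (((1 : Matrix (Fin m) (Fin m) ℂ) ⊗ₖ E).mulVec χ)⟫ =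
      ∑ l : Fin n, ∑ l' : Fin n,
        E l l' * ⟪firstFactorComponent φ l, firstFactorComponent χ l'⟫ := by
  simp only [EuclideanSpace.inner_eq_star_dotProduct]
  simp [Matrix.mulVec, dotProduct, Matrix.kroneckerMap_apply, Fintype.sum_prod_type,
    firstFactorComponent, Matrix.one_apply, Finset.mul_sum, Finset.sum_mul]
  rw [Finset.sum_comm]
  refine Finset.sum_congr rfl fun l _ => ?_
  rw [Finset.sum_comm]
  refine Finset.sum_congr rfl fun l' _ => Finset.sum_congr rfl fun k _ => ?_
  ring

/-- The authorized-set condition for sharing classical secrets: all cross matrix elements of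
operators on the second factor vanish iff all first-factor components of different encoded
states are orthogonal. -/
theorem authorized_condition_iff_orthogonal_components (m n : ℕ) (ι : Type*)
    (ψ : ι → EuclideanSpace ℂ (Fin m × Fin n)) :
    (∀ i j : ι, i ≠ j → ∀ E : Matrix (Fin n) (Fin n) ℂ,
        ⟪ψ i, WithLp.toLp 2 (((1 : Matrix (Fin m) (Fin m) ℂ) ⊗ₖ E).mulVec (ψ j))⟫ = 0) ↔
    (∀ i j : ι, i ≠ j → ∀ l l' : Fin n,
        ⟪firstFactorComponent (ψ i) l, firstFactorComponent (ψ j) l'⟫ = 0) := by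
  constructor
  · intro h i j hij l l'
    have := h i j hij (Matrix.single l l' 1)
    rw [inner_one_kron_mulVec] at this
    simpa [Matrix.single, Finset.sum_ite_eq', ite_and] using this
  · intro h i j hij E
    rw [inner_one_kron_mulVec]
    simp [h i j hij]
end

section
/- Let ψ : ι → EuclideanSpace ℂ (Fin m × Fin n) be a finite family of vectors such that for all i ≠ j and every matrix E : Matrix (Fin n) (Fin n) ℂ, ⟨ψ i, ((1 : Matrix (Fin m) (Fin m) ℂ) ⊗ₖ E).mulVec (ψ j)⟩ = 0. Then there exists a family of matrices P : ι → Matrix (Fin m) (Fin m) ℂ with P i Hermitian and idempotent (projections), P i * P j = 0 for i ≠ j, and ((P i) ⊗ₖ (1 : Matrix (Fin n) (Fin n) ℂ)).mulVec (ψ j) = ψ j if i = j and = 0 if i ≠ j. -/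
open scoped ComplexInnerProductSpace Kronecker

private lemma toEuclideanLin_mul' (m : ℕ) (A B : Matrix (Fin m) (Fin m) ℂ) :
    Matrix.toEuclideanLin (A * B) = (Matrix.toEuclideanLin A) ∘ₗ (Matrix.toEuclideanLin B) := by
  ext v
  simp [Matrix.toEuclideanLin_apply, Matrix.mulVec_mulVec]

private lemma inner_kron_one_std (m n : ℕ) (u v : EuclideanSpace ℂ (Fin m × Fin n)) (k l : Fin n) :
    ⟪u, WithLp.toLp 2 (((1 : Matrix (Fin m) (Fin m) ℂ) ⊗ₖ Matrix.single k l 1).mulVec v)⟫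
      = ∑ x : Fin m, starRingEnd ℂ (u (x, k)) * v (x, l) := by
  simp only [PiLp.inner_apply, RCLike.inner_apply]
  rw [Fintype.sum_prod_type]
  simp [Matrix.mulVec, dotProduct, Fintype.sum_prod_type, Matrix.one_apply,
    Matrix.single_apply, ite_and, mul_ite, ite_mul, Finset.mul_sum, Finset.sum_ite_eq,
    Finset.sum_ite_eq', eq_comm]
  exact Finset.sum_congr rfl fun _ _ => mul_comm _ _

private lemma kron_one_mulVec_apply (m n : ℕ) (P : Matrix (Fin m) (Fin m) ℂ)
    (v : EuclideanSpace ℂ (Fin m × Fin n)) (x : Fin m) (k : Fin n) :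
    ((P ⊗ₖ (1 : Matrix (Fin n) (Fin n) ℂ)).mulVec v) (x, k)
      = (P.mulVec (fun y => v (y, k))) x := by
  simp [Matrix.mulVec, dotProduct, Fintype.sum_prod_type, Matrix.one_apply,
    mul_ite, ite_mul]

/-- If a finite family of bipartite vectors satisfies the authorized-set condition (all cross
matrix elements of operators on the second factor vanish), then the index can be recovered by
a projective measurement on the first factor alone: there are mutually orthogonal Hermitian
projections `P i` on the first factor with `(P i ⊗ 1) ψ j = δ_{ij} ψ j`. -/
theorem projective_measurement_recovers_classical_secret (m n : ℕ) (ι : Type*) [Fintype ι]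
    (ψ : ι → EuclideanSpace ℂ (Fin m × Fin n))
    (h : ∀ i j : ι, i ≠ j → ∀ E : Matrix (Fin n) (Fin n) ℂ,
        ⟪ψ i, WithLp.toLp 2 (((1 : Matrix (Fin m) (Fin m) ℂ) ⊗ₖ E).mulVec (ψ j))⟫ = 0) :
    ∃ P : ι → Matrix (Fin m) (Fin m) ℂ,
      (∀ i, (P i).IsHermitian) ∧
      (∀ i, P i * P i = P i) ∧
      (∀ i j, i ≠ j → P i * P j = 0) ∧
      (∀ j, ((P j) ⊗ₖ (1 : Matrix (Fin n) (Fin n) ℂ)).mulVec (ψ j) = ψ j) ∧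
      (∀ i j, i ≠ j → ((P i) ⊗ₖ (1 : Matrix (Fin n) (Fin n) ℂ)).mulVec (ψ j) = 0) := by
  classical
  set E := EuclideanSpace ℂ (Fin m)
  -- the "slices" of ψ j in the first factor
  set slice : ι → Fin n → E := fun j k => (WithLp.equiv 2 (Fin m → ℂ)).symm (fun x => ψ j (x, k))
    with hslice
  have slice_apply : ∀ j k (x : Fin m), slice j k x = ψ j (x, k) := fun _ _ _ => rfl
  -- slices of distinct vectors are orthogonal
  have key : ∀ i j : ι, i ≠ j → ∀ k l : Fin n, ⟪slice i k, slice j l⟫ = 0 := by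
    intro i j hij k l
    have := h i j hij (Matrix.single k l 1)
    rw [inner_kron_one_std] at this
    rw [← this]
    change ∑ x, ⟪slice i k x, slice j l x⟫ = _
    simp [RCLike.inner_apply, slice_apply, mul_comm]
  set S : ι → Submodule ℂ E := fun i => Submodule.span ℂ (Set.range (slice i)) with hS
  have slice_mem : ∀ j k, slice j k ∈ S j := fun j k =>
    Submodule.subset_span ⟨k, rfl⟩
  -- S j ⊆ (S i)ᗮ for i ≠ j
  have hSub : ∀ i j : ι, i ≠ j → S j ≤ (S i)ᗮ := by
    intro i j hij
    rw [hS, Submodule.span_le]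
    rintro _ ⟨l, rfl⟩
    rw [SetLike.mem_coe, Submodule.mem_orthogonal]
    intro u hu
    induction hu using Submodule.span_induction with
    | mem x hx => obtain ⟨k, rfl⟩ := hx; exact key i j hij k l
    | zero => simp
    | add x y _ _ hx hy => rw [inner_add_left, hx, hy, add_zero]
    | smul c x _ hx => rw [inner_smul_left, hx, mul_zero]
  -- the projections
  set pr : ι → (E →L[ℂ] E) := fun i => (S i).subtypeL ∘L (S i).orthogonalProjectionOnto with hpr
  set P : ι → Matrix (Fin m) (Fin m) ℂ :=
    fun i => Matrix.toEuclideanLin.symm (pr i : E →ₗ[ℂ] E) with hPdef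
  have hP : ∀ i, Matrix.toEuclideanLin (P i) = (pr i : E →ₗ[ℂ] E) := fun i =>
    Matrix.toEuclideanLin.apply_symm_apply _
  have hmulVec : ∀ i (v : E), (P i).mulVec v = pr i v := by
    intro i v
    have : Matrix.toEuclideanLin (P i) v = pr i v := by rw [hP]; rfl
    exact congrArg WithLp.ofLp this
  have pr_self : ∀ i (v : E), v ∈ S i → pr i v = v := by
    intro i v hv
    simp only [hpr, ContinuousLinearMap.comp_apply, Submodule.subtypeL_apply]
    exact Submodule.starProjection_eq_self_iff.2 hv
  have pr_zero : ∀ i (v : E), v ∈ (S i)ᗮ → pr i v = 0 := by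
    intro i v hv
    simp only [hpr, ContinuousLinearMap.comp_apply, Submodule.subtypeL_apply]
    rw [Submodule.orthogonalProjectionOnto_apply_of_mem_orthogonal hv,
      Submodule.coe_zero]
  refine ⟨P, ?_, ?_, ?_, ?_, ?_⟩
  · intro i
    rw [Matrix.isHermitian_iff_isSymmetric, hP]
    exact Submodule.starProjection_isSymmetric (S i)
  · intro i
    apply Matrix.toEuclideanLin.injective
    rw [toEuclideanLin_mul', hP]
    refine LinearMap.ext fun v => ?_
    show pr i (pr i v) = pr i v
    exact pr_self i (pr i v) (by simp [hpr])
  · intro i j hij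
    apply Matrix.toEuclideanLin.injective
    rw [toEuclideanLin_mul', hP, hP, map_zero]
    refine LinearMap.ext fun v => ?_
    show pr i (pr j v) = 0
    exact pr_zero i (pr j v) (hSub i j hij (by simp [hpr]))
  · intro j
    funext p
    obtain ⟨x, k⟩ := p
    have := kron_one_mulVec_apply m n (P j) (ψ j) x k
    rw [this]
    have hfun : (fun y => ψ j (y, k)) = (slice j k : Fin m → ℂ) := rfl
    rw [hfun, hmulVec, pr_self j _ (slice_mem j k)]
    rfl
  · intro i j hij
    funext p
    obtain ⟨x, k⟩ := p
    have := kron_one_mulVec_apply m n (P i) (ψ j) x k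
    rw [this]
    have hfun : (fun y => ψ j (y, k)) = (slice j k : Fin m → ℂ) := rfl
    rw [hfun, hmulVec, pr_zero i _ (hSub i j hij (slice_mem j k))]
    rfl
end

section
/- Let C be a linear subspace of EuclideanSpace ℂ (Fin m × Fin n) such that for every matrix E : Matrix (Fin n) (Fin n) ℂ there is a constant c(E) ∈ ℂ with ⟨ψ, ((1 : Matrix (Fin m) (Fin m) ℂ) ⊗ₖ E).mulVec ψ⟩ = c(E) for every unit vector ψ ∈ C. Then the Gram matrix of first-factor components is state-independent: for all l, l' ∈ Fin n, the inner product ⟨a_l(ψ), a_{l'}(ψ)⟩ (where a_l(ψ)(k) = ψ(k,l)) is the same complex number for every unit vector ψ ∈ C. -/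
open scoped ComplexInnerProductSpace Kronecker

/-- If all expectation values of operators on the second factor are state-independent on a
subspace `C`, then the Gram matrix of the first-factor components is the same for every unit
vector of `C`. -/
theorem gram_matrix_state_independent (m n : ℕ)
    (C : Submodule ℂ (EuclideanSpace ℂ (Fin m × Fin n)))
    (h : ∀ E : Matrix (Fin n) (Fin n) ℂ, ∃ c : ℂ,
        ∀ ψ ∈ C, ‖ψ‖ = 1 →
          ⟪ψ, WithLp.toLp 2 (((1 : Matrix (Fin m) (Fin m) ℂ) ⊗ₖ E).mulVec ψ)⟫ = c) :
    ∀ l l' : Fin n, ∃ c : ℂ, ∀ ψ ∈ C, ‖ψ‖ = 1 →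
      ⟪firstFactorComponent ψ l, firstFactorComponent ψ l'⟫ = c := by
  intro l l'
  obtain ⟨c, hc⟩ := h (Matrix.single l l' 1)
  refine ⟨c, fun ψ hψ hn => ?_⟩
  rw [← hc ψ hψ hn]
  simp only [PiLp.inner_apply, firstFactorComponent, RCLike.inner_apply,
    Matrix.mulVec, dotProduct, Matrix.kroneckerMap_apply,
    Matrix.one_apply, Matrix.single, Fintype.sum_prod_type]
  simp [Finset.mul_sum, mul_ite, ite_and, Finset.sum_ite_eq, Finset.sum_ite_eq',
    mul_comm]
end

section
/- Let C be a linear subspace of EuclideanSpace ℂ (Fin m × Fin n) such that for every matrix E : Matrix (Fin n) (Fin n) ℂ there is a constant c(E) ∈ ℂ with ⟨ψ, ((1 : Matrix (Fin m) (Fin m) ℂ) ⊗ₖ E).mulVec ψ⟩ = c(E) for every unit vector ψ ∈ C. Then for any two unit vectors ψ, φ ∈ C there exists a unitary matrix V ∈ Matrix.unitaryGroup (Fin m) ℂ such that (V ⊗ₖ (1 : Matrix (Fin n) (Fin n) ℂ)).mulVec ψ = φ. -/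
open scoped ComplexInnerProductSpace Kronecker Matrix

private lemma gram_entry {m n : ℕ} (χ : EuclideanSpace ℂ (Fin m × Fin n)) (a b : Fin n) :
    ⟪χ, WithLp.toLp 2 (((1 : Matrix (Fin m) (Fin m) ℂ) ⊗ₖ Matrix.single a b (1:ℂ)).mulVec χ)⟫
      = (((Matrix.of fun i j => χ (i, j)) : Matrix (Fin m) (Fin n) ℂ)ᴴ
          * (Matrix.of fun i j => χ (i, j))) a b := by
  simp only [Matrix.mul_apply, Matrix.conjTranspose_apply, Matrix.of_apply, RCLike.star_def]
  simp only [PiLp.inner_apply, RCLike.inner_apply, Matrix.mulVec, dotProduct,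
    Fintype.sum_prod_type, Matrix.kroneckerMap_apply, Matrix.one_apply, Matrix.single,
    Matrix.of_apply, ite_and, ite_mul, one_mul, zero_mul, mul_ite, mul_zero, mul_one,
    Finset.sum_ite_irrel, Finset.sum_ite_eq, Finset.sum_ite_eq', Finset.mem_univ, if_true,
    Finset.sum_const_zero]
  exact Finset.sum_congr rfl fun _ _ => mul_comm _ _

private lemma toEuclideanLin_mul'_s6 {m n k : ℕ} (P : Matrix (Fin m) (Fin k) ℂ)
    (Q : Matrix (Fin k) (Fin n) ℂ) :
    Matrix.toEuclideanLin (P * Q) = (Matrix.toEuclideanLin P).comp (Matrix.toEuclideanLin Q) := by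
  ext w
  simp [Matrix.toEuclideanLin_apply, Matrix.mulVec_mulVec]

private lemma toEuclideanLin_one' {m : ℕ} :
    Matrix.toEuclideanLin (1 : Matrix (Fin m) (Fin m) ℂ) = LinearMap.id := by
  ext w
  simp [Matrix.toEuclideanLin_apply]

/-- If two matrices have the same Gram matrix, there is a unitary relating them. -/
private lemma exists_unitary_of_gram_eq {m n : ℕ} (M N : Matrix (Fin m) (Fin n) ℂ)
    (key : Mᴴ * M = Nᴴ * N) :
    ∃ V : Matrix.unitaryGroup (Fin m) ℂ, (V : Matrix (Fin m) (Fin m) ℂ) * M = N := by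
  set A := Matrix.toEuclideanLin M with hA
  set B := Matrix.toEuclideanLin N with hB
  -- inner products agree
  have hinner : ∀ w w', ⟪A w, A w'⟫ = ⟪B w, B w'⟫ := by
    intro w w'
    have h1 : ⟪A w, A w'⟫ = ⟪w, Matrix.toEuclideanLin (Mᴴ * M) w'⟫ := by
      rw [toEuclideanLin_mul'_s6, LinearMap.comp_apply,
        Matrix.toEuclideanLin_conjTranspose_eq_adjoint, LinearMap.adjoint_inner_right]
    have h2 : ⟪B w, B w'⟫ = ⟪w, Matrix.toEuclideanLin (Nᴴ * N) w'⟫ := by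
      rw [toEuclideanLin_mul'_s6, LinearMap.comp_apply,
        Matrix.toEuclideanLin_conjTranspose_eq_adjoint, LinearMap.adjoint_inner_right]
    rw [h1, h2, key]
  have hnorm : ∀ w, ‖A w‖ = ‖B w‖ := by
    intro w
    rw [@norm_eq_sqrt_re_inner ℂ, @norm_eq_sqrt_re_inner ℂ, hinner]
  have hker : LinearMap.ker A ≤ LinearMap.ker B := by
    intro w hw
    rw [LinearMap.mem_ker] at hw ⊢
    have := hnorm w
    rw [hw, norm_zero] at this
    exact (norm_eq_zero.mp this.symm)
  -- the isometry from range A sending A w to B w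
  let L0 : (EuclideanSpace ℂ (Fin n) ⧸ LinearMap.ker A) →ₗ[ℂ] EuclideanSpace ℂ (Fin m) :=
    (LinearMap.ker A).liftQ B hker
  let Lmap : (LinearMap.range A) →ₗ[ℂ] EuclideanSpace ℂ (Fin m) :=
    L0.comp (A.quotKerEquivRange.symm : (LinearMap.range A) →ₗ[ℂ] _)
  have hLmap : ∀ w, Lmap ⟨A w, LinearMap.mem_range_self A w⟩ = B w := by
    intro w
    have : (⟨A w, LinearMap.mem_range_self A w⟩ : LinearMap.range A)
        = A.quotKerEquivRange (Submodule.Quotient.mk w) :=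
      Subtype.ext (A.quotKerEquivRange_apply_mk w).symm
    simp only [Lmap, LinearMap.comp_apply, this, LinearEquiv.coe_coe,
      LinearEquiv.symm_apply_apply]
    exact Submodule.liftQ_apply _ _ _
  have hLnorm : ∀ x : LinearMap.range A, ‖Lmap x‖ = ‖x‖ := by
    rintro ⟨x, w, rfl⟩
    rw [hLmap w]
    exact ((hnorm w).symm : ‖B w‖ = ‖A w‖)
  let LI : (LinearMap.range A) →ₗᵢ[ℂ] EuclideanSpace ℂ (Fin m) := ⟨Lmap, hLnorm⟩
  let U : EuclideanSpace ℂ (Fin m) →ₗᵢ[ℂ] EuclideanSpace ℂ (Fin m) := LI.extend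
  have hUA : ∀ w, U (A w) = B w := by
    intro w
    have := LI.extend_apply ⟨A w, LinearMap.mem_range_self A w⟩
    rw [this]
    exact hLmap w
  -- the matrix of U
  let V : Matrix (Fin m) (Fin m) ℂ := Matrix.toEuclideanLin.symm U.toLinearMap
  have hV : Matrix.toEuclideanLin V = U.toLinearMap := Matrix.toEuclideanLin.apply_symm_apply _
  have hadj : (LinearMap.adjoint U.toLinearMap).comp U.toLinearMap = LinearMap.id := by
    apply LinearMap.ext; intro y
    apply ext_inner_left ℂ; intro x
    rw [LinearMap.comp_apply, LinearMap.adjoint_inner_right]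
    simp [U.inner_map_map x y]
  have hVmem : V ∈ Matrix.unitaryGroup (Fin m) ℂ := by
    rw [Matrix.mem_unitaryGroup_iff']
    apply Matrix.toEuclideanLin.injective
    rw [show (star V : Matrix (Fin m) (Fin m) ℂ) = Vᴴ from rfl, toEuclideanLin_mul'_s6,
      Matrix.toEuclideanLin_conjTranspose_eq_adjoint, hV, hadj, toEuclideanLin_one']
  refine ⟨⟨V, hVmem⟩, ?_⟩
  apply Matrix.toEuclideanLin.injective
  rw [toEuclideanLin_mul'_s6]
  apply LinearMap.ext; intro w
  simp only [LinearMap.comp_apply]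
  rw [hV, ← hA, ← hB]
  exact hUA w

/-- If the second subsystem carries no information about a state drawn from the subspace `C`
(all expectation values of operators on the second factor are state-independent on unit
vectors of `C`), then any unit vector of `C` can be converted to any other by a unitary
acting on the first subsystem alone. -/
theorem unitary_on_first_factor_connects_states (m n : ℕ)
    (C : Submodule ℂ (EuclideanSpace ℂ (Fin m × Fin n)))
    (h : ∀ E : Matrix (Fin n) (Fin n) ℂ, ∃ c : ℂ,
        ∀ ψ ∈ C, ‖ψ‖ = 1 →
          ⟪ψ, WithLp.toLp 2 (((1 : Matrix (Fin m) (Fin m) ℂ) ⊗ₖ E).mulVec ψ)⟫ = c) :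
    ∀ ψ ∈ C, ‖ψ‖ = 1 → ∀ φ ∈ C, ‖φ‖ = 1 →
      ∃ V : Matrix.unitaryGroup (Fin m) ℂ,
        (((V : Matrix (Fin m) (Fin m) ℂ) ⊗ₖ (1 : Matrix (Fin n) (Fin n) ℂ)).mulVec ψ)
          = φ := by
  intro ψ hψ hψn φ hφ hφn
  set M : Matrix (Fin m) (Fin n) ℂ := Matrix.of fun i j => ψ (i, j) with hM
  set N : Matrix (Fin m) (Fin n) ℂ := Matrix.of fun i j => φ (i, j) with hN
  have key : Mᴴ * M = Nᴴ * N := by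
    ext a b
    obtain ⟨c, hc⟩ := h (Matrix.single a b 1)
    have h1 := hc ψ hψ hψn
    have h2 := hc φ hφ hφn
    rw [gram_entry ψ a b] at h1
    rw [gram_entry φ a b] at h2
    rw [← hM] at h1
    rw [← hN] at h2
    rw [h1, h2]
  obtain ⟨V, hVN⟩ := exists_unitary_of_gram_eq M N key
  refine ⟨V, ?_⟩
  funext p
  obtain ⟨i, j⟩ := p
  have : (((V : Matrix (Fin m) (Fin m) ℂ) ⊗ₖ (1 : Matrix (Fin n) (Fin n) ℂ)).mulVec ψ) (i, j)
      = ((V : Matrix (Fin m) (Fin m) ℂ) * M) i j := by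
    simp only [Matrix.mulVec, dotProduct, Fintype.sum_prod_type,
      Matrix.kroneckerMap_apply, Matrix.one_apply, Matrix.mul_apply, hM, Matrix.of_apply,
      mul_ite, mul_one, mul_zero, ite_mul, zero_mul, Finset.sum_ite_eq, Finset.mem_univ, if_true]
  rw [this, hVN]
  rfl
end

section
/- Let C be a linear subspace of EuclideanSpace ℂ (Fin m × Fin n) such that for every matrix E : Matrix (Fin n) (Fin n) ℂ there is a constant c(E) ∈ ℂ with ⟨ψ, ((1 : Matrix (Fin m) (Fin m) ℂ) ⊗ₖ E).mulVec ψ⟩ = c(E) for every unit vector ψ ∈ C. Then for every surjective linear isometry U : C → C there exists a unitary matrix V ∈ Matrix.unitaryGroup (Fin m) ℂ such that (V ⊗ₖ (1 : Matrix (Fin n) (Fin n) ℂ)).mulVec ψ = U ψ for every ψ ∈ C. -/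
open scoped ComplexInnerProductSpace Kronecker

lemma polar_aux {V : Type*} [AddCommGroup V] [Module ℂ V] (S : V → V → ℂ)
    (h1 : ∀ x y z, S (x + y) z = S x z + S y z)
    (h2 : ∀ x y z, S x (y + z) = S x y + S x z)
    (h3 : ∀ (c : ℂ) (x y : V), S (c • x) y = (starRingEnd ℂ) c * S x y)
    (h4 : ∀ (c : ℂ) (x y : V), S x (c • y) = c * S x y)
    (hd : ∀ x, S x x = 0) : ∀ x y, S x y = 0 := by
  intro x y
  have e1 : S x y + S y x = 0 := by
    have h := hd (x + y)
    rw [h1, h2, h2, hd, hd] at h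
    linear_combination h
  have h' := hd (x + Complex.I • y)
  rw [h1, h2, h2, h3, h4, h3, h4, hd, hd] at h'
  have e2 : S x y = S y x := by
    apply mul_left_cancel₀ Complex.I_ne_zero
    simp [Complex.conj_I] at h'
    linear_combination h'
  linear_combination e1/2 + e2/2


set_option maxHeartbeats 1600000 in
/-- Theorem 5 of the paper: if the second subsystem reveals nothing about a state drawn from
the subspace `C`, then every surjective linear isometry of `C` can be implemented by a
unitary acting on the first subsystem alone. -/
theorem isometry_implemented_by_unitary_on_first_factor (m n : ℕ)
    (C : Submodule ℂ (EuclideanSpace ℂ (Fin m × Fin n)))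
    (h : ∀ E : Matrix (Fin n) (Fin n) ℂ, ∃ c : ℂ,
        ∀ ψ ∈ C, ‖ψ‖ = 1 →
          ⟪ψ, WithLp.toLp 2 (((1 : Matrix (Fin m) (Fin m) ℂ) ⊗ₖ E).mulVec ψ)⟫ = c)
    (U : C →ₗᵢ[ℂ] C) (hU : Function.Surjective U) :
    ∃ V : Matrix.unitaryGroup (Fin m) ℂ,
      ∀ ψ : C,
        (((V : Matrix (Fin m) (Fin m) ℂ) ⊗ₖ (1 : Matrix (Fin n) (Fin n) ℂ)).mulVec
            (ψ : EuclideanSpace ℂ (Fin m × Fin n)))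
          = ((U ψ : C) : EuclideanSpace ℂ (Fin m × Fin n)) := by
  classical
  letI : InnerProductSpace ℂ C := Submodule.innerProductSpace C
  choose ρ hρ using fun j k : Fin n => h (Matrix.single j k 1)
  have hB : ∀ (j k : Fin n) (ψ : EuclideanSpace ℂ (Fin m × Fin n)),
      ⟪ψ, WithLp.toLp 2 (((1 : Matrix (Fin m) (Fin m) ℂ) ⊗ₖ Matrix.single j k (1:ℂ)).mulVec ψ)⟫
        = ∑ i : Fin m, (starRingEnd ℂ) (ψ (i, j)) * ψ (i, k) := by
    intro j k ψ
    simp [PiLp.inner_apply, RCLike.inner_apply, Matrix.mulVec, dotProduct,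
      Matrix.one_apply, Matrix.single, Fintype.sum_prod_type, ite_and,
      Finset.mul_sum, Finset.sum_ite_eq, Finset.sum_ite_eq']
    exact Finset.sum_congr rfl fun _ _ => mul_comm _ _
  have keyQ : ∀ (j k : Fin n) (ψ : C),
      (∑ i : Fin m, (starRingEnd ℂ) ((ψ : EuclideanSpace ℂ (Fin m × Fin n)) (i, j))
          * (ψ : EuclideanSpace ℂ (Fin m × Fin n)) (i, k))
        = ⟪ψ, ψ⟫ * ρ j k := by
    intro j k ψ
    by_cases hz : ψ = 0
    · subst hz; simp
    · have hn : ‖ψ‖ ≠ 0 := by simpa using hz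
      set u : C := ((‖ψ‖⁻¹ : ℝ) : ℂ) • ψ with hu
      have hun : ‖u‖ = 1 := by
        rw [hu, norm_smul]
        simp only [Complex.norm_real, norm_inv, norm_norm]
        field_simp
      have h1 := hρ j k (u : EuclideanSpace ℂ (Fin m × Fin n)) u.2 (by
        rw [show ‖(u : EuclideanSpace ℂ (Fin m × Fin n))‖ = ‖u‖ from rfl, hun])
      rw [hB] at h1
      have hval : ∀ p, (u : EuclideanSpace ℂ (Fin m × Fin n)) p
          = ((‖ψ‖⁻¹ : ℝ) : ℂ) * (ψ : EuclideanSpace ℂ (Fin m × Fin n)) p := by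
        intro p; rw [hu]; simp
      simp only [hval, map_mul, Complex.conj_ofReal] at h1
      have hips : (⟪ψ, ψ⟫ : ℂ) = ((‖ψ‖ : ℝ) : ℂ) ^ 2 := by
        rw [show (⟪ψ, ψ⟫ : ℂ) = ((‖ψ‖^2 : ℝ) : ℂ) from ?_]
        · push_cast; ring
        · exact_mod_cast inner_self_eq_norm_sq_to_K (𝕜 := ℂ) ψ
      have hn2 : ((‖ψ‖ : ℝ) : ℂ) ≠ 0 := by exact_mod_cast hn
      rw [hips, ← h1, Finset.mul_sum]
      refine Finset.sum_congr rfl fun x _ => ?_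
      have hn3 : ((‖(ψ : EuclideanSpace ℂ (Fin m × Fin n))‖ : ℝ) : ℂ) ≠ 0 := hn2
      push_cast
      field_simp [hn3]
  have key : ∀ (j k : Fin n) (ψ φ : C),
      (∑ i : Fin m, (starRingEnd ℂ) ((ψ : EuclideanSpace ℂ (Fin m × Fin n)) (i, j))
          * (φ : EuclideanSpace ℂ (Fin m × Fin n)) (i, k))
        = ⟪ψ, φ⟫ * ρ j k := by
    intro j k ψ φ
    have hpol := polar_aux (V := C) (fun ψ φ =>
      (∑ i : Fin m, (starRingEnd ℂ) ((ψ : EuclideanSpace ℂ (Fin m × Fin n)) (i, j))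
          * (φ : EuclideanSpace ℂ (Fin m × Fin n)) (i, k)) - ⟪ψ, φ⟫ * ρ j k)
      ?_ ?_ ?_ ?_ ?_ ψ φ
    · exact sub_eq_zero.mp hpol
    · intro x y z
      simp only [Submodule.coe_add, PiLp.add_apply, inner_add_left, map_add,
        add_mul, Finset.sum_add_distrib]
      ring
    · intro x y z
      simp only [Submodule.coe_add, PiLp.add_apply, inner_add_right, map_add,
        mul_add, add_mul, Finset.sum_add_distrib]
      ring
    · intro c x y
      simp only [Submodule.coe_smul, PiLp.smul_apply, smul_eq_mul, map_mul,
        inner_smul_left, mul_assoc, ← Finset.mul_sum]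
      ring
    · intro c x y
      simp only [Submodule.coe_smul, PiLp.smul_apply, smul_eq_mul,
        inner_smul_right, mul_left_comm, ← Finset.mul_sum]
      ring
    · intro x
      exact sub_eq_zero.mpr (keyQ j k x)
  -- the linear map collecting columns
  let L : (Fin n → C) →ₗ[ℂ] EuclideanSpace ℂ (Fin m) :=
    { toFun := fun f => WithLp.toLp 2 (fun i => ∑ j, ((f j : EuclideanSpace ℂ (Fin m × Fin n)) (i, j)))
      map_add' := by
        intro f g; ext i
        simp [Finset.sum_add_distrib]
      map_smul' := by
        intro c f; ext i
        simp [Finset.mul_sum] }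
  have hLapp : ∀ (f : Fin n → C) (i : Fin m),
      L f i = ∑ j, ((f j : EuclideanSpace ℂ (Fin m × Fin n)) (i, j)) := fun _ _ => rfl
  have hinner : ∀ f g : Fin n → C, (⟪L f, L g⟫ : ℂ) = ∑ j, ∑ k, ⟪f j, g k⟫ * ρ j k := by
    intro f g
    calc (⟪L f, L g⟫ : ℂ)
        = ∑ i, (∑ j, (starRingEnd ℂ) ((f j : EuclideanSpace ℂ (Fin m × Fin n)) (i, j)))
            * (∑ k, ((g k : EuclideanSpace ℂ (Fin m × Fin n)) (i, k))) := by
          simp [PiLp.inner_apply, RCLike.inner_apply, hLapp, map_sum]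
          exact Finset.sum_congr rfl fun _ _ => mul_comm _ _
      _ = ∑ i, ∑ j, ∑ k, (starRingEnd ℂ) ((f j : EuclideanSpace ℂ (Fin m × Fin n)) (i, j))
            * ((g k : EuclideanSpace ℂ (Fin m × Fin n)) (i, k)) := by
          simp_rw [Finset.sum_mul, Finset.mul_sum]
      _ = ∑ j, ∑ k, ∑ i, (starRingEnd ℂ) ((f j : EuclideanSpace ℂ (Fin m × Fin n)) (i, j))
            * ((g k : EuclideanSpace ℂ (Fin m × Fin n)) (i, k)) := by
          rw [Finset.sum_comm]
          exact Finset.sum_congr rfl fun j _ => Finset.sum_comm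
      _ = ∑ j, ∑ k, ⟪f j, g k⟫ * ρ j k := by
          exact Finset.sum_congr rfl fun j _ => Finset.sum_congr rfl fun k _ => key j k (f j) (g k)
  let Umap : (Fin n → C) →ₗ[ℂ] (Fin n → C) :=
    LinearMap.pi (fun j => U.toLinearMap.comp (LinearMap.proj j))
  let L' : (Fin n → C) →ₗ[ℂ] EuclideanSpace ℂ (Fin m) := L.comp Umap
  have hL'app : ∀ f : Fin n → C, L' f = L (fun j => U (f j)) := fun _ => rfl
  clear_value L Umap L'
  have hinner' : ∀ f g : Fin n → C, (⟪L' f, L' g⟫ : ℂ) = ⟪L f, L g⟫ := by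
    intro f g
    rw [hL'app, hL'app, hinner, hinner]
    exact Finset.sum_congr rfl fun j _ => Finset.sum_congr rfl fun k _ => by
      rw [LinearIsometry.inner_map_map]
  have hnorm : ∀ f : Fin n → C, ‖L' f‖ = ‖L f‖ := by
    intro f
    rw [@norm_eq_sqrt_re_inner ℂ, @norm_eq_sqrt_re_inner ℂ, hinner']
  have hker : LinearMap.ker L ≤ LinearMap.ker L' := by
    intro f hf
    rw [LinearMap.mem_ker] at hf ⊢
    have : ‖L' f‖ = 0 := by rw [hnorm, hf, norm_zero]
    exact norm_eq_zero.mp this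
  let Vq : ((Fin n → C) ⧸ LinearMap.ker L) →ₗ[ℂ] EuclideanSpace ℂ (Fin m) :=
    (LinearMap.ker L).liftQ L' hker
  let e := L.quotKerEquivRange
  let V0lin : (LinearMap.range L) →ₗ[ℂ] EuclideanSpace ℂ (Fin m) :=
    Vq.comp (e.symm : (LinearMap.range L) →ₗ[ℂ] ((Fin n → C) ⧸ LinearMap.ker L))
  have hV0 : ∀ (f : Fin n → C) (hf : L f ∈ LinearMap.range L),
      V0lin ⟨L f, hf⟩ = L' f := by
    intro f hf
    have h1 : e (Submodule.Quotient.mk f) = ⟨L f, hf⟩ :=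
      Subtype.ext (L.quotKerEquivRange_apply_mk f)
    have h2 : e.symm ⟨L f, hf⟩ = Submodule.Quotient.mk f := by
      rw [← h1, LinearEquiv.symm_apply_apply]
    show Vq (e.symm ⟨L f, hf⟩) = L' f
    rw [h2]
    exact Submodule.liftQ_apply _ _ _
  have hV0norm : ∀ w : LinearMap.range L, ‖V0lin w‖ = ‖w‖ := by
    rintro ⟨w, hw⟩
    obtain ⟨f, rfl⟩ := hw
    exact (congrArg norm (hV0 f _)).trans (hnorm f)
  clear_value Vq e V0lin
  let V0 : (LinearMap.range L) →ₗᵢ[ℂ] EuclideanSpace ℂ (Fin m) := ⟨V0lin, hV0norm⟩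
  let Vfull : EuclideanSpace ℂ (Fin m) →ₗᵢ[ℂ] EuclideanSpace ℂ (Fin m) := V0.extend
  have hVfull : ∀ f : Fin n → C, Vfull (L f) = L' f := by
    intro f
    have := V0.extend_apply ⟨L f, LinearMap.mem_range_self L f⟩
    rw [show V0 ⟨L f, LinearMap.mem_range_self L f⟩ = L' f from hV0 f _] at this
    exact this
  clear_value V0 Vfull
  -- the matrix of Vfull
  let g : (Fin m → ℂ) →ₗ[ℂ] (Fin m → ℂ) :=
    { toFun := fun x => (Vfull (WithLp.toLp 2 x)).ofLp
      map_add' := fun x y => by simp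
      map_smul' := fun c x => by simp }
  let Vmat : Matrix (Fin m) (Fin m) ℂ := LinearMap.toMatrix' g
  have hmul : ∀ x : EuclideanSpace ℂ (Fin m), Vmat.mulVec x = Vfull x := by
    intro x
    have h1 : Matrix.toLin' (LinearMap.toMatrix' g) x = g x := by
      rw [Matrix.toLin'_toMatrix']
    rw [← Matrix.toLin'_apply]
    exact h1
  have hcol : ∀ (k : Fin m) (i : Fin m), Vmat i k = Vfull (EuclideanSpace.single k (1:ℂ)) i := by
    intro k i
    have h1 : Vmat.mulVec (EuclideanSpace.single k (1:ℂ)) = Vfull (EuclideanSpace.single k 1) :=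
      hmul _
    have h2 : Vmat.mulVec (EuclideanSpace.single k (1:ℂ)) i = Vmat i k := by
      simp [Matrix.mulVec, dotProduct, EuclideanSpace.single_apply, mul_ite]
    rw [← h2, h1]
  clear_value g Vmat
  have hunit : Vmat ∈ Matrix.unitaryGroup (Fin m) ℂ := by
    rw [Matrix.mem_unitaryGroup_iff']
    refine Matrix.ext fun j k => ?_
    have hip := Vfull.inner_map_map (EuclideanSpace.single j (1:ℂ)) (EuclideanSpace.single k 1)
    have lhs : (star Vmat * Vmat) j k
        = ∑ i, (starRingEnd ℂ) (Vfull (EuclideanSpace.single j (1:ℂ)) i)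
            * Vfull (EuclideanSpace.single k (1:ℂ)) i := by
      simp [Matrix.mul_apply, Matrix.star_apply, hcol, mul_comm]
    have h3 : (⟪Vfull (EuclideanSpace.single j (1:ℂ)), Vfull (EuclideanSpace.single k 1)⟫ : ℂ)
        = ∑ i, (starRingEnd ℂ) (Vfull (EuclideanSpace.single j (1:ℂ)) i)
            * Vfull (EuclideanSpace.single k (1:ℂ)) i := by
      simp only [PiLp.inner_apply, RCLike.inner_apply]
      exact Finset.sum_congr rfl fun _ _ => mul_comm _ _
    calc (star Vmat * Vmat) j k
        = ∑ i, (starRingEnd ℂ) (Vfull (EuclideanSpace.single j (1:ℂ)) i)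
            * Vfull (EuclideanSpace.single k (1:ℂ)) i := lhs
      _ = ⟪Vfull (EuclideanSpace.single j (1:ℂ)), Vfull (EuclideanSpace.single k 1)⟫ := h3.symm
      _ = ⟪EuclideanSpace.single j (1:ℂ), EuclideanSpace.single k (1:ℂ)⟫ := hip
      _ = (1 : Matrix (Fin m) (Fin m) ℂ) j k := by
          rw [EuclideanSpace.inner_single_left]
          simp [EuclideanSpace.single_apply, Matrix.one_apply]
  -- conclude
  have hsingle : ∀ (φ : C) (j : Fin n),
      L (Pi.single j φ) = (fun i => (φ : EuclideanSpace ℂ (Fin m × Fin n)) (i, j)) := by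
    intro φ j
    funext i
    rw [hLapp]
    rw [Finset.sum_eq_single j]
    · simp
    · intro b _ hb
      simp [Pi.single_apply, hb]
    · intro hj
      exact absurd (Finset.mem_univ j) hj
  have hUsingle : ∀ (φ : C) (j : Fin n),
      (fun k => U ((Pi.single j φ : Fin n → C) k)) = (Pi.single j (U φ) : Fin n → C) := by
    intro φ j
    funext k
    by_cases hk : k = j
    · subst hk; simp
    · simp [Pi.single_apply, hk]
  refine ⟨⟨Vmat, hunit⟩, ?_⟩
  intro ψ
  funext p
  obtain ⟨i, j⟩ := p
  have hlhs : ((Vmat ⊗ₖ (1 : Matrix (Fin n) (Fin n) ℂ)).mulVec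
      (ψ : EuclideanSpace ℂ (Fin m × Fin n))) (i, j)
      = ∑ k, Vmat i k * (ψ : EuclideanSpace ℂ (Fin m × Fin n)) (k, j) := by
    simp [Matrix.mulVec, dotProduct, Matrix.one_apply, Fintype.sum_prod_type,
      mul_ite, Finset.sum_ite_eq, Finset.sum_ite_eq']
  have hcolv : (Vmat.mulVec (fun i' => (ψ : EuclideanSpace ℂ (Fin m × Fin n)) (i', j))) i
      = ∑ k, Vmat i k * (ψ : EuclideanSpace ℂ (Fin m × Fin n)) (k, j) := rfl
  have hchain : Vmat.mulVec (fun i' => (ψ : EuclideanSpace ℂ (Fin m × Fin n)) (i', j))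
      = (fun i' => ((U ψ : C) : EuclideanSpace ℂ (Fin m × Fin n)) (i', j)) := by
    rw [← hsingle ψ j, hmul, hVfull, hL'app, hUsingle, hsingle]
  rw [hlhs, ← hcolv, hchain]
end

section
/- Let n ≥ 1 and let Γ be a collection of subsets of Fin n that is upward closed (A ∈ Γ and A ⊆ B imply B ∈ Γ) and satisfies the no-cloning condition: A ∈ Γ implies Aᶜ ∉ Γ. Then there exists a collection Γ' ⊇ Γ of subsets of Fin n that is upward closed and satisfies: for every subset A, A ∈ Γ' if and only if Aᶜ ∉ Γ'. -/
/-- Any monotone access structure on `n ≥ 1` shares satisfying the no-cloning condition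
(the complement of an authorized set is unauthorized) extends to a maximal quantum access
structure, i.e. a monotone collection in which a set is authorized iff its complement is
unauthorized. -/
theorem extend_to_maximal_quantum_access_structure (n : ℕ) (hn : 1 ≤ n)
    (Γ : Set (Set (Fin n)))
    (hmono : ∀ A B : Set (Fin n), A ∈ Γ → A ⊆ B → B ∈ Γ)
    (hnc : ∀ A : Set (Fin n), A ∈ Γ → Aᶜ ∉ Γ) :
    ∃ Γ' : Set (Set (Fin n)),
      Γ ⊆ Γ' ∧
      (∀ A B : Set (Fin n), A ∈ Γ' → A ⊆ B → B ∈ Γ') ∧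
      (∀ A : Set (Fin n), A ∈ Γ' ↔ Aᶜ ∉ Γ') := by
  set S : Set (Set (Set (Fin n))) :=
    {T | (∀ A B : Set (Fin n), A ∈ T → A ⊆ B → B ∈ T) ∧
         (∀ A : Set (Fin n), A ∈ T → Aᶜ ∉ T)} with hS
  have hΓS : Γ ∈ S := ⟨hmono, hnc⟩
  have hchain : ∀ c ⊆ S, IsChain (· ⊆ ·) c → c.Nonempty →
      ∃ ub ∈ S, ∀ s ∈ c, s ⊆ ub := by
    intro c hcS hchain ⟨t0, ht0⟩
    refine ⟨⋃₀ c, ⟨?_, ?_⟩, fun s hs => Set.subset_sUnion_of_mem hs⟩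
    · rintro A B ⟨t, htc, hAt⟩ hAB
      exact ⟨t, htc, (hcS htc).1 A B hAt hAB⟩
    · rintro A ⟨t, htc, hAt⟩ ⟨t', ht'c, hAt'⟩
      rcases hchain.total htc ht'c with h | h
      · exact (hcS ht'c).2 A (h hAt) hAt'
      · exact (hcS htc).2 A hAt (h hAt')
  obtain ⟨m, hΓm, hmS, hmax⟩ := zorn_subset_nonempty S hchain Γ hΓS
  obtain ⟨hm_mono, hm_nc⟩ := hmS
  refine ⟨m, hΓm, hm_mono, fun A => ⟨fun hA => hm_nc A hA, fun hAc => ?_⟩⟩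
  by_contra hA
  -- A ∉ m and Aᶜ ∉ m. One of A, Aᶜ is nonempty since Fin n is nonempty.
  have key : ∀ C : Set (Fin n), C.Nonempty → C ∉ m → Cᶜ ∉ m → False := by
    intro C hCne hC hCc
    set m' : Set (Set (Fin n)) := m ∪ {B | C ⊆ B} with hm'
    have hm'S : m' ∈ S := by
      constructor
      · rintro X Y (hX | hX) hXY
        · exact Or.inl (hm_mono X Y hX hXY)
        · exact Or.inr (hX.trans hXY)
      · rintro X (hX | hX) (hXc | hXc)
        · exact hm_nc X hX hXc
        · -- X ∈ m, C ⊆ Xᶜ, so X ⊆ Cᶜ, so Cᶜ ∈ m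
          exact hCc (hm_mono X Cᶜ hX (Set.subset_compl_comm.mp hXc))
        · -- C ⊆ X, Xᶜ ∈ m ⟹ Cᶜ ∈ m since Xᶜ ⊆ Cᶜ
          exact hCc (hm_mono Xᶜ Cᶜ hXc (Set.compl_subset_compl.mpr hX))
        · -- C ⊆ X and C ⊆ Xᶜ ⟹ C = ∅
          obtain ⟨x, hx⟩ := hCne
          exact hXc hx (hX hx)
    have : m' = m := Set.Subset.antisymm (hmax hm'S Set.subset_union_left) Set.subset_union_left
    have : C ∈ m := by
      rw [← this]; exact Or.inr (subset_refl C)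
    exact hC this
  rcases Set.eq_empty_or_nonempty A with hAe | hAne
  · have : (Aᶜ : Set (Fin n)).Nonempty := by
      rw [hAe, Set.compl_empty]
      exact ⟨⟨0, hn⟩, trivial⟩
    exact key Aᶜ this hAc (by rwa [compl_compl])
  · exact key A hAne hA hAc
end

section
/- There do not exist weights w : Fin 5 → ℝ and a threshold k : ℝ such that for every subset S of Fin 5, (∑ i in S, w i) ≥ k holds if and only if ({0,1,2,3} ⊆ S) ∨ ({0,3,4} ⊆ S) ∨ ({1,2,3} ⊆ S). -/
/-- The access structure on five parties `A,B,C,D,E = 0,1,2,3,4` with minimal authorized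
sets `ABCD`, `ADE`, `BCD` cannot be realized as a weighted threshold scheme. -/
theorem no_weighted_threshold_realization :
    ¬ ∃ (w : Fin 5 → ℝ) (k : ℝ),
      ∀ S : Finset (Fin 5),
        (k ≤ ∑ i ∈ S, w i) ↔
          (({0, 1, 2, 3} : Finset (Fin 5)) ⊆ S ∨
           ({0, 3, 4} : Finset (Fin 5)) ⊆ S ∨
           ({1, 2, 3} : Finset (Fin 5)) ⊆ S) := by
  rintro ⟨w, k, h⟩
  have hADE : k ≤ ∑ i ∈ ({0, 3, 4} : Finset (Fin 5)), w i :=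
    (h {0, 3, 4}).mpr (by decide)
  have hBCD : k ≤ ∑ i ∈ ({1, 2, 3} : Finset (Fin 5)), w i :=
    (h {1, 2, 3}).mpr (by decide)
  have hABD : ¬ k ≤ ∑ i ∈ ({0, 1, 3} : Finset (Fin 5)), w i :=
    fun hle => absurd ((h {0, 1, 3}).mp hle) (by decide)
  have hCDE : ¬ k ≤ ∑ i ∈ ({2, 3, 4} : Finset (Fin 5)), w i :=
    fun hle => absurd ((h {2, 3, 4}).mp hle) (by decide)
  push_neg at hABD hCDE
  have e1 : (∑ i ∈ ({0, 3, 4} : Finset (Fin 5)), w i) = w 0 + w 3 + w 4 := by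
    simp [Finset.sum_insert]; ring
  have e2 : (∑ i ∈ ({1, 2, 3} : Finset (Fin 5)), w i) = w 1 + w 2 + w 3 := by
    simp [Finset.sum_insert]; ring
  have e3 : (∑ i ∈ ({0, 1, 3} : Finset (Fin 5)), w i) = w 0 + w 1 + w 3 := by
    simp [Finset.sum_insert]; ring
  have e4 : (∑ i ∈ ({2, 3, 4} : Finset (Fin 5)), w i) = w 2 + w 3 + w 4 := by
    simp [Finset.sum_insert]; ring
  rw [e1] at hADE; rw [e2] at hBCD; rw [e3] at hABD; rw [e4] at hCDE
  linarith
end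

section
/- Let F be a field, α : Fin n → F injective, and r a natural number. If v : Fin n → F is nonzero and satisfies ∑ i, v i * f.eval (α i) = 0 for every polynomial f over F of degree at most r, then v has Hamming weight (number of nonzero coordinates) at least r + 2. -/
/-- The dual of the polynomial MDS code `D_r` has minimum distance `r + 2`: any nonzero
vector orthogonal to all evaluation vectors of polynomials of degree at most `r` has Hamming
weight at least `r + 2`. -/
theorem dual_polynomial_code_min_distance (F : Type*) [Field F] [DecidableEq F]
    (n r : ℕ) (α : Fin n → F) (hα : Function.Injective α)
    (v : Fin n → F) (hv : v ≠ 0)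
    (h : ∀ f : Polynomial F, f.natDegree ≤ r → ∑ i, v i * f.eval (α i) = 0) :
    r + 2 ≤ (Finset.univ.filter fun i => v i ≠ 0).card := by
  by_contra hc
  push_neg at hc
  set S := Finset.univ.filter fun i => v i ≠ 0 with hS
  have hcard : S.card ≤ r + 1 := Nat.lt_succ_iff.mp hc
  obtain ⟨i₀, hi₀⟩ : ∃ i, v i ≠ 0 := by
    by_contra hz; push_neg at hz; exact hv (funext hz)
  have hi₀S : i₀ ∈ S := Finset.mem_filter.mpr ⟨Finset.mem_univ _, hi₀⟩
  have hinj : Set.InjOn α S := hα.injOn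
  set f := Lagrange.basis S α i₀ with hf
  have hdeg : f.natDegree ≤ r := by
    rw [hf, Lagrange.natDegree_basis hinj hi₀S]
    omega
  have hsum := h f hdeg
  have : ∑ i, v i * f.eval (α i) = v i₀ := by
    rw [← Finset.sum_filter_of_ne (f := fun i => v i * f.eval (α i))
      (p := fun i => v i ≠ 0) (by intro i _ hne hvi; simp [hvi] at hne)]
    rw [← hS, Finset.sum_eq_single i₀]
    · rw [hf, Lagrange.eval_basis_self hinj hi₀S, mul_one]
    · intro j hj hji
      rw [hf, Lagrange.eval_basis_of_ne (Ne.symm hji) hj, mul_zero]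
    · intro habs; exact absurd hi₀S habs
  rw [this] at hsum
  exact hi₀ hsum
end

section
/- Let F be a field, α : Fin n → F injective, and 1 ≤ r with r + 1 ≤ n. Then for every subset T of Fin n with |T| = r + 1: (i) there exists v : Fin n → F whose support is exactly T such that ∑ i, v i * (α i)^k = 0 for every k ≤ r − 1, and ∑ i, v i * (α i)^r ≠ 0; (ii) moreover, every nonzero v : Fin n → F with support contained in T satisfying ∑ i, v i * (α i)^k = 0 for all k ≤ r − 1 also satisfies ∑ i, v i * (α i)^r ≠ 0. -/
private lemma sum_restrict_aux {F : Type*} [Field F] {n m : ℕ} (T : Finset (Fin n))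
    (e : Fin m ≃ T) (v : Fin n → F) (hv : ∀ i, v i ≠ 0 → i ∈ T) (g : Fin n → F) :
    ∑ i, v i * g i = ∑ j, v (e j) * g (e j) := by
  rw [← Finset.sum_subset (Finset.subset_univ T) (fun x _ hx => by
        have : v x = 0 := by by_contra h; exact hx (hv x h)
        simp [this])]
  rw [← Finset.sum_coe_sort T (fun i => v i * g i)]
  exact (Fintype.sum_equiv e _ _ (fun j => rfl)).symm

/-- The Lemma of Section 4 (first half): for any set `T` of `r + 1` coordinates there is a
vector with support exactly `T` in the dual of the polynomial code `D_{r-1}`, and every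
nonzero dual vector supported in `T` necessarily pairs nontrivially with the row `R` of
evaluations of `x^r` (i.e. `∑ v i (α i)^r ≠ 0`). -/
theorem dual_codeword_on_any_support (F : Type*) [Field F] (n r : ℕ)
    (α : Fin n → F) (hα : Function.Injective α) (hr1 : 1 ≤ r) (hrn : r + 1 ≤ n) :
    ∀ T : Finset (Fin n), T.card = r + 1 →
      (∃ v : Fin n → F,
        (∀ i, v i ≠ 0 ↔ i ∈ T) ∧
        (∀ k ≤ r - 1, ∑ i, v i * (α i) ^ k = 0) ∧
        ∑ i, v i * (α i) ^ r ≠ 0) ∧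
      (∀ v : Fin n → F, v ≠ 0 → (∀ i, v i ≠ 0 → i ∈ T) →
        (∀ k ≤ r - 1, ∑ i, v i * (α i) ^ k = 0) →
        ∑ i, v i * (α i) ^ r ≠ 0) := by
  intro T hT
  let e : Fin (r + 1) ≃ T := (T.equivFin.trans (finCongr hT)).symm
  set β : Fin (r + 1) → F := fun j => α (e j) with hβdef
  have hβ : Function.Injective β := fun a b hab => by
    have : (e a : Fin n) = e b := hα hab
    exact e.injective (Subtype.ext this)
  constructor
  · -- existence
    set M : Matrix (Fin (r + 1)) (Fin (r + 1)) F := Matrix.vandermonde β with hM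
    have hdet : IsUnit M.det := by
      rw [hM]
      exact (Matrix.det_vandermonde_ne_zero_iff.mpr hβ).isUnit
    set u : Fin (r + 1) → F := Pi.single (Fin.last r) 1 with hu
    set w : Fin (r + 1) → F := Matrix.vecMul u M⁻¹ with hw
    have hwM : Matrix.vecMul w M = u := by
      rw [hw, Matrix.vecMul_vecMul, Matrix.nonsing_inv_mul M hdet, Matrix.vecMul_one]
    have hmom : ∀ k : Fin (r + 1), ∑ j, w j * β j ^ (k : ℕ) = u k := by
      intro k
      have := congrFun hwM k
      simpa [hM, Matrix.vecMul, dotProduct, Matrix.vandermonde] using this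
    -- all entries of w are nonzero
    have hwne : ∀ j, w j ≠ 0 := by
      intro j0 hj0
      have hw' : (fun i : Fin r => w (j0.succAbove i)) = 0 := by
        apply Matrix.eq_zero_of_forall_pow_sum_mul_pow_eq_zero
          (f := fun i : Fin r => β (j0.succAbove i))
          (fun a b hab => Fin.succAbove_right_injective (hβ hab))
        intro k
        have h1 : ∑ j, w j * β j ^ (k : ℕ) = 0 := by
          rw [hmom ⟨(k : ℕ), by omega⟩, hu]
          have : (⟨(k : ℕ), by omega⟩ : Fin (r + 1)) ≠ Fin.last r := by
            intro h
            have := congrArg Fin.val h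
            simp at this; omega
          simp [Pi.single_apply, this]
        rw [Fin.sum_univ_succAbove (fun j => w j * β j ^ (k : ℕ)) j0, hj0] at h1
        simpa using h1
      have hwz : w = 0 := by
        funext i
        rcases eq_or_ne i j0 with rfl | hij
        · exact hj0
        · obtain ⟨i', rfl⟩ := Fin.exists_succAbove_eq hij
          exact congrFun hw' i'
      have := hmom (Fin.last r)
      rw [hwz] at this
      simp [hu] at this
    -- define v
    refine ⟨fun i => if h : i ∈ T then w (e.symm ⟨i, h⟩) else 0, ?_, ?_, ?_⟩
    · intro i
      constructor
      · intro hvi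
        by_contra h
        simp [h] at hvi
      · intro h
        simp only [dif_pos h]
        exact hwne _
    · intro k hk
      have hsupp : ∀ i, (if h : i ∈ T then w (e.symm ⟨i, h⟩) else 0) ≠ 0 → i ∈ T := by
        intro i h
        by_contra hc
        simp [hc] at h
      rw [sum_restrict_aux T e _ hsupp (fun i => α i ^ k)]
      have heq : ∀ j : Fin (r + 1),
          (if h : (e j : Fin n) ∈ T then w (e.symm ⟨(e j : Fin n), h⟩) else 0) = w j := by
        intro j
        rw [dif_pos (e j).2]
        congr 1
        have : (⟨(e j : Fin n), (e j).2⟩ : T) = e j := Subtype.ext rfl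
        rw [this, Equiv.symm_apply_apply]
      simp_rw [heq]
      have h1 : ∑ j, w j * β j ^ k = 0 := by
        rw [show (k : ℕ) = ((⟨k, by omega⟩ : Fin (r + 1)) : ℕ) from rfl,
          hmom ⟨k, by omega⟩, hu]
        have : (⟨k, by omega⟩ : Fin (r + 1)) ≠ Fin.last r := by
          intro h
          have := congrArg Fin.val h
          simp at this; omega
        simp [Pi.single_apply, this]
      exact h1
    · have hsupp : ∀ i, (if h : i ∈ T then w (e.symm ⟨i, h⟩) else 0) ≠ 0 → i ∈ T := by
        intro i h
        by_contra hc
        simp [hc] at h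
      rw [sum_restrict_aux T e _ hsupp (fun i => α i ^ r)]
      have heq : ∀ j : Fin (r + 1),
          (if h : (e j : Fin n) ∈ T then w (e.symm ⟨(e j : Fin n), h⟩) else 0) = w j := by
        intro j
        rw [dif_pos (e j).2]
        congr 1
        have : (⟨(e j : Fin n), (e j).2⟩ : T) = e j := Subtype.ext rfl
        rw [this, Equiv.symm_apply_apply]
      simp_rw [heq]
      have h1 : ∑ j, w j * β j ^ r = 1 := by
        have := hmom (Fin.last r)
        simpa [hu, Fin.last] using this
      rw [h1]
      exact one_ne_zero
  · -- uniqueness part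
    intro v hv hsupp hmomv hcon
    apply hv
    have hw : (fun j : Fin (r + 1) => v (e j)) = 0 := by
      apply Matrix.eq_zero_of_forall_pow_sum_mul_pow_eq_zero hβ
      intro k
      have : ∑ i, v i * α i ^ (k : ℕ) = 0 := by
        rcases Nat.lt_or_ge (k : ℕ) r with h | h
        · exact hmomv k (by omega)
        · have : (k : ℕ) = r := by omega
          rw [this]; exact hcon
      rw [← sum_restrict_aux T e v hsupp (fun i => α i ^ (k : ℕ))]
      exact this
    funext i
    show v i = 0
    by_cases h : i ∈ T
    · have h2 : v (e (e.symm ⟨i, h⟩)) = 0 := congrFun hw (e.symm ⟨i, h⟩)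
      rw [Equiv.apply_symm_apply] at h2
      exact h2
    · by_contra hc
      exact h (hsupp i hc)
end

section
/- Let F be a field, r ≤ n, and α : Fin (n + 1) → F injective (index 0 is the secret location, indices 1,…,n are the share locations). Let I be a subset of {1, …, n} with |I| = r, and let s ∈ F. Then the map sending a polynomial f over F of degree at most r with f.eval (α 0) = s to its tuple of evaluations (f.eval (α i))_{i ∈ I} is a bijection onto F^I. In particular, the number of degree-≤r polynomials consistent with the secret s and any fixed tuple of r share values is the same (namely one) for every s. -/
/-- Perfect secrecy of Shamir's threshold scheme via polynomial codes: for any set `I` of `r`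
share locations (not containing the secret location `0`) and any secret value `s`, the map
sending a polynomial of degree at most `r` with `f(α 0) = s` to its tuple of share values
`(f(α i))_{i ∈ I}` is a bijection onto `F^I`. -/
theorem shamir_shares_bijective (F : Type*) [Field F] (n r : ℕ) (hr : r ≤ n)
    (α : Fin (n + 1) → F) (hα : Function.Injective α)
    (I : Finset (Fin (n + 1))) (hI0 : (0 : Fin (n + 1)) ∉ I) (hIcard : I.card = r)
    (s : F) :
    Function.Bijective
      (fun f : {f : Polynomial F // f.natDegree ≤ r ∧ f.eval (α 0) = s} =>
        (fun i : I => (f : Polynomial F).eval (α i)) : _ → (I → F)) := by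
  have hScard : (insert (0 : Fin (n + 1)) I).card = r + 1 :=
    by rw [Finset.card_insert_of_notMem hI0, hIcard]
  have hdeg : ∀ f : Polynomial F, f.natDegree ≤ r →
      f.degree < ((insert (0 : Fin (n + 1)) I).card : ℕ) := by
    intro f hf
    rw [hScard]
    calc f.degree ≤ (r : WithBot ℕ) := Polynomial.degree_le_of_natDegree_le hf
    _ < ((r + 1 : ℕ) : WithBot ℕ) := by exact_mod_cast Nat.lt_succ_self r
  constructor
  · rintro ⟨f, hfd, hfs⟩ ⟨g, hgd, hgs⟩ h
    simp only [Subtype.mk.injEq]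
    refine Polynomial.eq_of_degrees_lt_of_eval_index_eq (insert 0 I) (hα.injOn)
      (hdeg f hfd) (hdeg g hgd) ?_
    intro i hi
    rcases Finset.mem_insert.mp hi with rfl | hi
    · rw [hfs, hgs]
    · exact congrFun h ⟨i, hi⟩
  · intro v
    set val : Fin (n + 1) → F := fun i => if h : i ∈ I then v ⟨i, h⟩ else s with hval
    set g := Lagrange.interpolate (insert 0 I) α val with hg
    have hgdlt : g.degree < ((insert (0 : Fin (n + 1)) I).card : ℕ) :=
      Lagrange.degree_interpolate_lt _ hα.injOn
    have hgd : g.natDegree ≤ r := by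
      rcases eq_or_ne g 0 with h0 | h0
      · simp [h0]
      · have := (Polynomial.natDegree_lt_iff_degree_lt h0).mpr (by rwa [hScard] at hgdlt)
        omega
    have heval : ∀ i ∈ insert (0 : Fin (n + 1)) I, g.eval (α i) = val i :=
      fun i hi => Lagrange.eval_interpolate_at_node val hα.injOn hi
    have hgs : g.eval (α 0) = s := by
      rw [heval 0 (Finset.mem_insert_self _ _), hval]; simp [hI0]
    refine ⟨⟨g, hgd, hgs⟩, ?_⟩
    funext i
    show g.eval (α i) = v i
    rw [heval i (Finset.mem_insert_of_mem i.2)]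
    simp [hval, i.2]
end

section
/- Let ι be a finite index type, let Γ₁ be a collection of subsets of ι that is upward closed and satisfies A ∈ Γ₁ ↔ Aᶜ ∉ Γ₁, and for each i : ι let S i be a finite type and Γ₂ i a collection of subsets of S i that is upward closed and satisfies B ∈ Γ₂ i ↔ Bᶜ ∉ Γ₂ i. Define the composed collection Γ on subsets T of the sigma type Σ i, S i by: T ∈ Γ if and only if { i | {x | ⟨i, x⟩ ∈ T} ∈ Γ₂ i } ∈ Γ₁. Then Γ is upward closed and satisfies T ∈ Γ ↔ Tᶜ ∉ Γ. -/
/-- Concatenation of secret sharing schemes with maximal quantum access structures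
(Theorem 6 of the paper, combinatorial content): if `Γ₁` is a monotone maximal access
structure on the outer shares `ι` and each `Γ₂ i` is a monotone maximal access structure on
the inner shares `S i`, then the composed access structure on `Σ i, S i` — a set `T` is
authorized iff the set of outer shares whose inner section is authorized is `Γ₁`-authorized —
is monotone and maximal. -/
theorem concatenated_access_structure_monotone_maximal
    (ι : Type*) [Fintype ι] (S : ι → Type*) [∀ i, Fintype (S i)]
    (Γ₁ : Set (Set ι))
    (hmono₁ : ∀ A B : Set ι, A ∈ Γ₁ → A ⊆ B → B ∈ Γ₁)
    (hmax₁ : ∀ A : Set ι, A ∈ Γ₁ ↔ Aᶜ ∉ Γ₁)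
    (Γ₂ : ∀ i, Set (Set (S i)))
    (hmono₂ : ∀ i, ∀ A B : Set (S i), A ∈ Γ₂ i → A ⊆ B → B ∈ Γ₂ i)
    (hmax₂ : ∀ i, ∀ A : Set (S i), A ∈ Γ₂ i ↔ Aᶜ ∉ Γ₂ i)
    (Γ : Set (Set (Σ i, S i)))
    (hΓ : ∀ T : Set (Σ i, S i),
      T ∈ Γ ↔ { i : ι | { x : S i | (⟨i, x⟩ : Σ i, S i) ∈ T } ∈ Γ₂ i } ∈ Γ₁) :
    (∀ T T' : Set (Σ i, S i), T ∈ Γ → T ⊆ T' → T' ∈ Γ) ∧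
    (∀ T : Set (Σ i, S i), T ∈ Γ ↔ Tᶜ ∉ Γ) := by
  constructor
  · intro T T' hT hTT'
    rw [hΓ] at hT ⊢
    refine hmono₁ _ _ hT ?_
    intro i hi
    exact hmono₂ i _ _ hi (fun x hx => hTT' hx)
  · intro T
    rw [hΓ, hΓ]
    have hcompl : { i : ι | { x : S i | (⟨i, x⟩ : Σ i, S i) ∈ Tᶜ } ∈ Γ₂ i }
        = { i : ι | { x : S i | (⟨i, x⟩ : Σ i, S i) ∈ T } ∈ Γ₂ i }ᶜ := by
      ext i
      simp only [Set.mem_setOf_eq, Set.mem_compl_iff]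
      rw [show { x : S i | (⟨i, x⟩ : Σ i, S i) ∉ T } = { x : S i | (⟨i, x⟩ : Σ i, S i) ∈ T }ᶜ from rfl,
        hmax₂ i, compl_compl]
    rw [hcompl]
    exact hmax₁ _
end
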